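/- Let a ≥ 0, m ∈ ℕ with m ≥ 1, and x ≥ 0. Then for every bounded continuous f : [0,∞) → ℝ, lim_{n→∞} Σ_{k=0}^{∞} e^{−a(x/n)/(1+x/n)} · ( Σ_{i=0}^{k} C(k,i) (∏_{l=0}^{i−1}(mn+l)) a^{k−i} ) / k! · (x/n)^k / (1 + x/n)^{mn+k} · f(k/m) = Σ_{k=0}^{∞} e^{−mx}(mx)^k/k! · f(k/m); that is, lim_{n→∞} Q_{mn}^{a}( f(nt); x/n ) = B_m^{[0]}( f(t); x ). -/

import Mathlib

/-!
The weights `q_{mn,k}^a(x/n)` of `Q_{mn}^a` are the convolution of the Baskakov (negative binomial)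
weights `(mn)^{(i)}/i! ⋅ y^i/(1+y)^{mn+i}`, `y = x/n`, with the Poisson weights of rate
`a y/(1+y)`, so they form a probability distribution on `ℕ`. As `n → ∞` the Baskakov weights tend
to the Poisson weights of rate `mx` and the rate `a y/(1+y)` tends to `0`, so `q_{mn,k}^a(x/n)` tends
to `e^{-mx}(mx)^k/k!` for every `k`. By Scheffé's lemma this convergence of probability weights
holds in `ℓ¹`, which gives the limit against every bounded `f`.
-/

open Filter Topology Finset

section Scheffe

variable {α ι : Type*} {l : Filter α} {p : α → ι → ℝ} {q : ι → ℝ}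

theorem Summable.mul_of_abs_le {f g : ι → ℝ} {M : ℝ} (hf : Summable f) (hg : ∀ i, |g i| ≤ M) :
    Summable fun i => f i * g i :=
  hf.abs.mul_right M |>.of_norm_bounded fun i => by
    rw [Real.norm_eq_abs, abs_mul]
    exact mul_le_mul_of_nonneg_left (hg i) (abs_nonneg _)

theorem tendsto_tsum_abs_sub_of_tendsto_hasSum {s : α → ℝ} {t : ℝ} (hp : ∀ n i, 0 ≤ p n i)
    (hps : ∀ n, HasSum (p n) (s n)) (hq : HasSum q t) (hst : Tendsto s l (𝓝 t))
    (hlim : ∀ i, Tendsto (fun n => p n i) l (𝓝 (q i))) :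
    Tendsto (fun n => ∑' i, |p n i - q i|) l (𝓝 0) := by
  have hmin_le (n) (i) : |min (p n i) (q i)| ≤ |q i| :=
    abs_le.2 ⟨le_min ((neg_nonpos.2 (abs_nonneg _)).trans (hp n i)) (neg_abs_le _),
      (min_le_right _ _).trans (le_abs_self _)⟩
  have hmins (n) : Summable fun i => min (p n i) (q i) :=
    hq.summable.abs.of_norm_bounded (hmin_le n)
  have hmin : Tendsto (fun n => ∑' i, min (p n i) (q i)) l (𝓝 t) := by
    rw [← hq.tsum_eq]
    refine tendsto_tsum_of_dominated_convergence hq.summable.abs (fun i => ?_)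
      (Eventually.of_forall hmin_le)
    simpa using (hlim i).min (tendsto_const_nhds (x := q i))
  -- `|p - q| = p + q - 2 min(p, q)`, and the sums of `p n` and `q` both tend to `t`.
  have habs (n) : ∑' i, |p n i - q i| = s n + t - 2 * ∑' i, min (p n i) (q i) := by
    rw [← (hps n).tsum_eq, ← hq.tsum_eq, ← (hps n).summable.tsum_add hq.summable,
      ← tsum_mul_left, ← ((hps n).summable.add hq.summable).tsum_sub ((hmins n).mul_left 2)]
    congr 1 with i
    linarith [max_sub_min_eq_abs' (p n i) (q i), min_add_max (p n i) (q i)]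
  simp_rw [habs]
  convert (hst.add_const t).sub (hmin.const_mul 2) using 2
  ring

theorem tendsto_tsum_mul_of_tendsto_hasSum {s : α → ℝ} {t : ℝ} (hp : ∀ n i, 0 ≤ p n i)
    (hps : ∀ n, HasSum (p n) (s n)) (hq : HasSum q t) (hst : Tendsto s l (𝓝 t))
    (hlim : ∀ i, Tendsto (fun n => p n i) l (𝓝 (q i))) {g : ι → ℝ} {M : ℝ}
    (hg : ∀ i, |g i| ≤ M) :
    Tendsto (fun n => ∑' i, p n i * g i) l (𝓝 (∑' i, q i * g i)) := by
  rw [← tendsto_sub_nhds_zero_iff]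
  refine squeeze_zero_norm (fun n => ?_)
    (by simpa using (tendsto_tsum_abs_sub_of_tendsto_hasSum hp hps hq hst hlim).const_mul M)
  rw [← ((hps n).summable.mul_of_abs_le hg).tsum_sub (hq.summable.mul_of_abs_le hg)]
  refine tsum_of_norm_bounded (((hps n).summable.sub hq.summable).abs.hasSum.mul_left M)
    fun i => ?_
  rw [← sub_mul, Real.norm_eq_abs, abs_mul, mul_comm M]
  exact mul_le_mul_of_nonneg_left (hg i) (abs_nonneg _)

end Scheffe

noncomputable def poissonWeight (c : ℝ) (j : ℕ) : ℝ :=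
  Real.exp (-c) * c ^ j / j.factorial

noncomputable def baskakovWeight (N : ℕ) (y : ℝ) (i : ℕ) : ℝ :=
  (∏ l ∈ range i, ((N : ℝ) + l)) / i.factorial * (y ^ i / (1 + y) ^ (N + i))

-- `qWeight a N y k` is the weight `q_{N,k}^a(y)` of the operator `Q_N^a`.
noncomputable def qWeight (a : ℝ) (N : ℕ) (y : ℝ) (k : ℕ) : ℝ :=
  Real.exp (-(a * y / (1 + y))) *
    ((∑ i ∈ range (k + 1), (k.choose i : ℝ) * (∏ l ∈ range i, ((N : ℝ) + l)) * a ^ (k - i)) /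
      k.factorial) *
    (y ^ k / (1 + y) ^ (N + k))

theorem hasSum_poissonWeight (c : ℝ) : HasSum (poissonWeight c) 1 := by
  have h := (NormedSpace.expSeries_div_hasSum_exp c).mul_left (Real.exp (-c))
  rw [← Real.exp_eq_exp_ℝ, ← Real.exp_add, neg_add_cancel, Real.exp_zero] at h
  unfold poissonWeight
  simpa only [mul_div_assoc] using h

theorem continuous_poissonWeight (j : ℕ) : Continuous fun c => poissonWeight c j := by
  unfold poissonWeight; fun_prop

theorem poissonWeight_zero (j : ℕ) : poissonWeight 0 j = if j = 0 then 1 else 0 := by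
  cases j <;> simp [poissonWeight]

theorem hasSum_baskakovWeight (N : ℕ) {y : ℝ} (hy : 0 ≤ y) : HasSum (baskakovWeight N y) 1 := by
  rcases N with _ | K
  · convert hasSum_single 0 fun i hi => ?_
    · simp [baskakovWeight]
    · rw [baskakovWeight, prod_eq_zero (mem_range.2 (Nat.pos_of_ne_zero hi)) (by simp)]
      simp
  -- for `N = K + 1` this is the negative binomial series in `y / (1 + y)`
  have hy1 : 0 < 1 + y := by linarith
  have hz1 : ‖y / (1 + y)‖ < 1 := by
    rw [Real.norm_eq_abs, abs_of_nonneg (by positivity), div_lt_one hy1]; linarith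
  have h1z : 1 - y / (1 + y) = (1 + y)⁻¹ := by field_simp; ring
  have h := (hasSum_choose_mul_geometric_of_norm_lt_one K hz1).mul_right
    ((1 - y / (1 + y)) ^ (K + 1))
  rw [one_div, inv_mul_cancel₀ (by rw [h1z]; positivity), h1z] at h
  refine h.congr_fun fun i => ?_
  have hprod : ∏ l ∈ range i, (((K + 1 : ℕ) : ℝ) + l) = i.factorial * ((i + K).choose K : ℕ) := by
    have := Nat.ascFactorial_eq_factorial_mul_choose K i
    rw [← Nat.choose_symm_add, Nat.add_comm K i, Nat.ascFactorial_eq_prod_range] at this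
    exact_mod_cast this
  rw [baskakovWeight, hprod, div_pow, inv_pow, pow_add]
  field_simp

theorem qWeight_eq_sum_baskakovWeight_mul_poissonWeight (a : ℝ) (N : ℕ) {y : ℝ} (hy : 1 + y ≠ 0)
    (k : ℕ) :
    qWeight a N y k =
      ∑ i ∈ range (k + 1), baskakovWeight N y i * poissonWeight (a * y / (1 + y)) (k - i) := by
  rw [qWeight, sum_div, mul_sum, sum_mul]
  refine sum_congr rfl fun i hi => ?_
  obtain ⟨j, rfl⟩ := Nat.exists_eq_add_of_le (Nat.lt_succ_iff.1 (mem_range.1 hi))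
  rw [Nat.add_sub_cancel_left, Nat.cast_choose ℝ (Nat.le_add_right i j), Nat.add_sub_cancel_left,
    baskakovWeight, poissonWeight, div_pow, mul_pow]
  field_simp
  ring

theorem qWeight_nonneg {a : ℝ} (ha : 0 ≤ a) (N : ℕ) {y : ℝ} (hy : 0 ≤ y) (k : ℕ) :
    0 ≤ qWeight a N y k := by
  unfold qWeight; positivity

theorem hasSum_qWeight (a : ℝ) (N : ℕ) {y : ℝ} (hy : 0 ≤ y) :
    HasSum (qWeight a N y) 1 := by
  have hb := hasSum_baskakovWeight N hy
  have hp := hasSum_poissonWeight (a * y / (1 + y))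
  have h := hasSum_sum_range_mul_of_summable_norm hb.summable.norm hp.summable.norm
  rw [hb.tsum_eq, hp.tsum_eq, one_mul] at h
  exact h.congr_fun fun k =>
    qWeight_eq_sum_baskakovWeight_mul_poissonWeight a N (by positivity) k

theorem tendsto_baskakovWeight (m : ℕ) (x : ℝ) (i : ℕ) :
    Tendsto (fun n : ℕ => baskakovWeight (m * n) (x / n) i) atTop
      (𝓝 (poissonWeight (m * x) i)) := by
  have hprod : Tendsto (fun n : ℕ => ∏ l ∈ range i, ((((m * n : ℕ) : ℝ) + l) * (x / n))) atTop
      (𝓝 ((m * x) ^ i)) := by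
    have hfactor (l : ℕ) : Tendsto (fun n : ℕ => (((m * n : ℕ) : ℝ) + l) * (x / n)) atTop
        (𝓝 (m * x)) := by
      have h := (tendsto_const_div_atTop_nhds_zero_nat (l * x)).const_add (m * x)
      rw [add_zero] at h
      refine h.congr' ((eventually_ne_atTop 0).mono fun n hn => ?_)
      push_cast
      field_simp
    simpa using tendsto_finsetProd (range i) fun l _ => hfactor l
  have hpow : Tendsto (fun n : ℕ => (1 + x / n) ^ (m * n + i)) atTop (𝓝 (Real.exp (m * x))) := by
    have h1 : Tendsto (fun n : ℕ => 1 + x / n) atTop (𝓝 1) := by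
      simpa using (tendsto_const_div_atTop_nhds_zero_nat x).const_add 1
    have h := ((Real.tendsto_one_add_div_pow_exp x).pow m).mul (h1.pow i)
    rw [one_pow, mul_one, ← Real.exp_nat_mul] at h
    refine h.congr fun n => ?_
    rw [pow_add, mul_comm m n, pow_mul]
  have h := (hprod.div_const (i.factorial : ℝ)).div hpow (Real.exp_pos _).ne'
  rw [poissonWeight, Real.exp_neg]
  convert h using 1
  · funext n
    rw [Pi.div_apply, prod_mul_distrib, prod_const, card_range, baskakovWeight]
    ring
  · field_simp

theorem tendsto_qWeight (a : ℝ) (m : ℕ) {x : ℝ} (hx : 0 ≤ x) (k : ℕ) :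
    Tendsto (fun n : ℕ => qWeight a (m * n) (x / n) k) atTop (𝓝 (poissonWeight (m * x) k)) := by
  have hy (n : ℕ) : 1 + x / n ≠ 0 := by positivity
  have hrate : Tendsto (fun n : ℕ => a * (x / n) / (1 + x / n)) atTop (𝓝 0) := by
    have h := tendsto_const_div_atTop_nhds_zero_nat x
    rw [show (0 : ℝ) = a * 0 / (1 + 0) by simp]
    exact (h.const_mul a).div (h.const_add 1) (by norm_num)
  have h := tendsto_finsetSum (range (k + 1)) fun i _ =>
    (tendsto_baskakovWeight m x i).mul (((continuous_poissonWeight (k - i)).tendsto 0).comp hrate)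
  simp_rw [poissonWeight_zero, Nat.sub_eq_zero_iff_le] at h
  rw [sum_eq_single_of_mem k (self_mem_range_succ k) fun i hi hik => ?_] at h
  · simpa [qWeight_eq_sum_baskakovWeight_mul_poissonWeight a _ (hy _)] using h
  · rw [if_neg (by have := mem_range.1 hi; omega), mul_zero]

theorem stmt_6_general (a : ℝ) (ha : 0 ≤ a) (m : ℕ) (x : ℝ) (hx : 0 ≤ x)
    (f : ℝ → ℝ)
    (hfb : ∃ M : ℝ, ∀ t ∈ Set.Ici (0 : ℝ), |f t| ≤ M) :
    Tendsto (fun n : ℕ =>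
        ∑' k : ℕ,
          Real.exp (-(a * (x / n) / (1 + x / n))) *
            ((∑ i ∈ Finset.range (k + 1),
                (k.choose i : ℝ) * (∏ l ∈ Finset.range i, (((m * n : ℕ) : ℝ) + l)) *
                  a ^ (k - i)) / (k.factorial : ℝ)) *
              ((x / n) ^ k / (1 + x / n) ^ (m * n + k)) * f (k / m))
      atTop
      (𝓝 (∑' k : ℕ, Real.exp (-(m * x)) * (m * x) ^ k / (k.factorial : ℝ) * f (k / m))) := by
  obtain ⟨M, hM⟩ := hfb
  have hy (n : ℕ) : 0 ≤ x / n := by positivity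
  exact tendsto_tsum_mul_of_tendsto_hasSum (fun n => qWeight_nonneg ha (m * n) (hy n))
    (fun n => hasSum_qWeight a (m * n) (hy n)) (hasSum_poissonWeight (m * x)) tendsto_const_nhds
    (tendsto_qWeight a m hx) fun k => hM _ (Set.mem_Ici.2 (by positivity))

/-- **Convergence of the rescaled operators `Q_n^a` to the Szász–Mirakjan operator:**
for `a ≥ 0`, `m ≥ 1`, `x ≥ 0` and bounded continuous `f : [0,∞) → ℝ`,
`lim_{n→∞} Q_{mn}^a(f(nt); x/n) = B_m^{[0]}(f(t); x)`. -/
theorem stmt_6 (a : ℝ) (ha : 0 ≤ a) (m : ℕ) (hm : 1 ≤ m) (x : ℝ) (hx : 0 ≤ x)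
    (f : ℝ → ℝ) (hf : ContinuousOn f (Set.Ici 0))
    (hfb : ∃ M : ℝ, ∀ t ∈ Set.Ici (0 : ℝ), |f t| ≤ M) :
    Tendsto (fun n : ℕ =>
        ∑' k : ℕ,
          Real.exp (-(a * (x / n) / (1 + x / n))) *
            ((∑ i ∈ Finset.range (k + 1),
                (k.choose i : ℝ) * (∏ l ∈ Finset.range i, (((m * n : ℕ) : ℝ) + l)) *
                  a ^ (k - i)) / (k.factorial : ℝ)) *
              ((x / n) ^ k / (1 + x / n) ^ (m * n + k)) * f (k / m))
      atTop
      (𝓝 (∑' k : ℕ, Real.exp (-(m * x)) * (m * x) ^ k / (k.factorial : ℝ) * f (k / m))) :=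
  stmt_6_general a ha m x hx f hfb
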